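/- Two hyperbolic planes with distinct negative curvatures −K and −K′ (K, K′ > 0, K ≠ K′) do not admit a configuration of four points (equilateral triangle of side 1 together with the midpoint of one side) with all six pairwise distances equal; specifically, the median lengths of unit equilateral triangles differ. -/

import Mathlib

/-!
With `a = m + 1/2`, `b = m - 1/2` and `s = √K`, the median equation reads
`cosh (a s) + cosh (b s) = 2 cosh s`, that is `∑ₙ (a²ⁿ + b²ⁿ - 2) Kⁿ / (2n)! = 0`.
The equation forces `m > 1/2`, so `x ↦ (a²)ˣ + (b²)ˣ` is strictly convex with value `2`
at `0`: the coefficients change sign exactly once. By the rule of signs such a power series has at most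
one positive zero, so `m` determines `K`.
-/

open Real Set
open scoped Nat

theorem hasSum_cosh_add_cosh_sub_two_cosh (a b x : ℝ) :
    HasSum (fun n ↦ ((a ^ 2) ^ n + (b ^ 2) ^ n - 2) / (2 * n)! * (x ^ 2) ^ n)
      (cosh (a * x) + cosh (b * x) - 2 * cosh x) := by
  refine (((hasSum_cosh (a * x)).add (hasSum_cosh (b * x))).sub
    ((hasSum_cosh x).mul_left 2)).congr_fun fun n ↦ ?_
  simp only [mul_pow, pow_mul]
  ring

theorem cosh_add_cosh_eq_two_cosh_of_cosh_eq_mul {s m : ℝ}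
    (h : cosh s = cosh (s / 2) * cosh (s * m)) :
    cosh ((m + 1 / 2) * s) + cosh ((m - 1 / 2) * s) = 2 * cosh s := by
  rw [h, add_mul, sub_mul, cosh_add, cosh_sub]
  ring_nf

theorem one_half_lt_of_cosh_add_cosh_eq {s m : ℝ} (hs : 0 < s) (hm : 0 ≤ m)
    (h : cosh ((m + 1 / 2) * s) + cosh ((m - 1 / 2) * s) = 2 * cosh s) : 1 / 2 < m := by
  by_contra! hm'
  have h₁ : cosh ((m + 1 / 2) * s) ≤ cosh s := by
    rw [cosh_le_cosh, abs_of_nonneg (by positivity), abs_of_pos hs]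
    nlinarith
  have h₂ : cosh ((m - 1 / 2) * s) < cosh s := by
    rw [cosh_lt_cosh, abs_of_pos hs, abs_lt]
    constructor <;> nlinarith
  linarith

theorem strictConvexOn_rpow_left {b : ℝ} (hb₀ : 0 < b) (hb₁ : b ≠ 1) :
    StrictConvexOn ℝ univ fun x : ℝ ↦ b ^ x := by
  have hlog : log b ≠ 0 := log_ne_zero_of_pos_of_ne_one hb₀ hb₁
  have himage : (fun x : ℝ ↦ log b * x) '' univ = univ :=
    image_univ_of_surjective fun y ↦ ⟨y / log b, mul_div_cancel₀ y hlog⟩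
  have h := (himage ▸ strictConvexOn_exp).comp_convexOn (f := fun x : ℝ ↦ log b * x)
    ((LinearMap.mul ℝ ℝ (log b)).convexOn convex_univ) (exp_monotone.monotoneOn _)
    (fun x _ y _ hxy ↦ mul_left_cancel₀ hlog hxy)
  convert h using 1
  ext x
  simp [rpow_def_of_pos hb₀]

theorem two_lt_rpow_add_rpow_of_two_le {u v x y : ℝ} (hu : 1 < u) (hv : 0 < v) (hx : 0 < x)
    (hxy : x < y) (h : 2 ≤ u ^ x + v ^ x) : 2 < u ^ y + v ^ y := by
  have hconv := (strictConvexOn_rpow_left (by linarith) hu.ne').add_convexOn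
    (convexOn_rpow_left hv)
  have := hconv.secant_strict_mono (mem_univ 0) (mem_univ x) (mem_univ y) hx.ne' (by linarith) hxy
  simp only [Pi.add_apply, rpow_zero, sub_zero, one_add_one_eq_two] at this
  have hslope : 0 < (u ^ y + v ^ y - 2) / y :=
    (div_nonneg (sub_nonneg.2 h) hx.le).trans_lt this
  exact sub_pos.1 ((div_pos_iff_of_pos_right (hx.trans hxy)).1 hslope)

theorem exists_pow_add_pow_sign_change {u v : ℝ} (hu : 1 < u) (hv : 0 < v) :
    ∃ N : ℕ, (∀ n < N, u ^ n + v ^ n ≤ 2) ∧ ∀ n, N ≤ n → 2 < u ^ n + v ^ n := by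
  have hex : ∃ n : ℕ, 2 < u ^ n + v ^ n := by
    obtain ⟨n, hn⟩ := pow_unbounded_of_one_lt 2 hu
    exact ⟨n, by linarith [pow_pos hv n]⟩
  classical
  refine ⟨Nat.find hex, fun n hn ↦ not_lt.1 (Nat.find_min hex hn), fun n hn ↦ ?_⟩
  rcases hn.eq_or_lt with rfl | hlt
  · exact Nat.find_spec hex
  have hN : 0 < Nat.find hex := (Nat.find_pos hex).2 (by norm_num)
  have := two_lt_rpow_add_rpow_of_two_le (x := Nat.find hex) (y := n) hu hv
    (by exact_mod_cast hN) (by exact_mod_cast hlt)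
  simp only [rpow_natCast] at this
  exact this (Nat.find_spec hex).le

theorem pow_mul_pow_lt_pow_mul_pow {s t : ℝ} (hs : 0 < s) (hst : s < t) {m n : ℕ}
    (hmn : m < n) :
    t ^ m * s ^ n < s ^ m * t ^ n := by
  obtain ⟨k, rfl⟩ := Nat.exists_eq_add_of_lt hmn
  have ht : 0 < t := hs.trans hst
  have hpow : s ^ (k + 1) < t ^ (k + 1) := pow_lt_pow_left₀ hst hs.le k.succ_ne_zero
  calc t ^ m * s ^ (m + k + 1) = (s * t) ^ m * s ^ (k + 1) := by ring
    _ < (s * t) ^ m * t ^ (k + 1) := by gcongr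
    _ = s ^ m * t ^ (m + k + 1) := by ring

theorem eq_of_hasSum_mul_pow_eq_zero {c : ℕ → ℝ} {N : ℕ} (hneg : ∀ n < N, c n ≤ 0)
    (hpos : ∀ n, N ≤ n → 0 < c n) {s t : ℝ} (hs : 0 < s) (ht : 0 < t)
    (hs0 : HasSum (fun n ↦ c n * s ^ n) 0) (ht0 : HasSum (fun n ↦ c n * t ^ n) 0) : s = t := by
  wlog hst : s < t generalizing s t
  · rcases (not_lt.1 hst).eq_or_lt with h | h
    · exact h.symm
    · exact (this ht hs ht0 hs0 h).symm
  -- in `sᴺ f(t) - tᴺ f(s)` every term has the sign of `c n * (n - N)`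
  have hsum : HasSum (fun n ↦ c n * (t ^ n * s ^ N - s ^ n * t ^ N)) 0 := by
    simpa [mul_sub, mul_assoc] using (ht0.mul_right (s ^ N)).sub (hs0.mul_right (t ^ N))
  have hterm : ∀ n, 0 ≤ c n * (t ^ n * s ^ N - s ^ n * t ^ N) := by
    intro n
    rcases lt_trichotomy n N with h | rfl | h
    · exact mul_nonneg_of_nonpos_of_nonpos (hneg n h)
        (by linarith [pow_mul_pow_lt_pow_mul_pow hs hst h])
    · simp [mul_comm]
    · exact (mul_pos (hpos n h.le) (by linarith [pow_mul_pow_lt_pow_mul_pow hs hst h])).le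
  have hlast : 0 < c (N + 1) * (t ^ (N + 1) * s ^ N - s ^ (N + 1) * t ^ N) :=
    mul_pos (hpos _ (by omega)) (by linarith [pow_mul_pow_lt_pow_mul_pow hs hst (Nat.lt_add_one N)])
  linarith [le_hasSum hsum (N + 1) fun n _ ↦ hterm n]

theorem stmt3_general (K K' m m' : ℝ) (hK : 0 < K) (hK' : 0 < K') (hne : K ≠ K')
    (hm : 0 ≤ m)
    (h1 : Real.cosh (Real.sqrt K) = Real.cosh (Real.sqrt K / 2) * Real.cosh (Real.sqrt K * m))
    (h2 : Real.cosh (Real.sqrt K') =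
      Real.cosh (Real.sqrt K' / 2) * Real.cosh (Real.sqrt K' * m')) :
    m ≠ m' := by
  rintro rfl
  have hseries : ∀ L : ℝ, 0 < L → cosh √L = cosh (√L / 2) * cosh (√L * m) →
      HasSum (fun n ↦ (((m + 1 / 2) ^ 2) ^ n + ((m - 1 / 2) ^ 2) ^ n - 2) / (2 * n)! * L ^ n) 0 :=
    fun L hL h ↦ by
      have := hasSum_cosh_add_cosh_sub_two_cosh (m + 1 / 2) (m - 1 / 2) √L
      rwa [sq_sqrt hL.le, cosh_add_cosh_eq_two_cosh_of_cosh_eq_mul h, sub_self] at this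
  have hm₁ : 1 / 2 < m :=
    one_half_lt_of_cosh_add_cosh_eq (sqrt_pos.2 hK) hm (cosh_add_cosh_eq_two_cosh_of_cosh_eq_mul h1)
  obtain ⟨N, hneg, hpos⟩ := exists_pow_add_pow_sign_change (u := (m + 1 / 2) ^ 2)
    (v := (m - 1 / 2) ^ 2) (by nlinarith) (by nlinarith)
  exact hne <| eq_of_hasSum_mul_pow_eq_zero
    (fun n hn ↦ div_nonpos_of_nonpos_of_nonneg (by linarith [hneg n hn]) (by positivity))
    (fun n hn ↦ div_pos (by linarith [hpos n hn]) (by positivity)) hK hK' (hseries K hK h1)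
    (hseries K' hK' h2)

/-- Hyperbolic planes of distinct curvatures `−K ≠ −K′` give different median lengths for
unit equilateral triangles: if `m` (resp. `m′`) is the nonnegative solution of
`cosh(√K) = cosh(√K/2)·cosh(√K·m)` (resp. with `K′`), then `K ≠ K′` implies `m ≠ m′`,
so no distance-preserving configuration of the four points exists. -/
theorem stmt3 (K K' m m' : ℝ) (hK : 0 < K) (hK' : 0 < K') (hne : K ≠ K')
    (hm : 0 ≤ m) (hm' : 0 ≤ m')
    (h1 : Real.cosh (Real.sqrt K) = Real.cosh (Real.sqrt K / 2) * Real.cosh (Real.sqrt K * m))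
    (h2 : Real.cosh (Real.sqrt K') =
      Real.cosh (Real.sqrt K' / 2) * Real.cosh (Real.sqrt K' * m')) :
    m ≠ m' :=
  stmt3_general K K' m m' hK hK' hne hm h1 h2
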